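/- In the constraint graph C_G, the subgraph induced on V_X is a disjoint union of paths (every vertex has degree at most 2 within V_X, and there is no cycle within V_X), and likewise for V_Y; moreover the edges between V_X and V_Y form a matching. -/

import Mathlib

open Finset

variable {m : ℕ}

/-- First endpoint of the `e`-th edge of the Hamiltonian path induced by `π`. -/
def pFst (π : Equiv.Perm (Fin (m+1))) (e : Fin m) : Fin (m+1) := π e.castSucc

/-- Second endpoint of the `e`-th edge of the Hamiltonian path induced by `π`. -/
def pSnd (π : Equiv.Perm (Fin (m+1))) (e : Fin m) : Fin (m+1) := π e.succ

/-- Position of vertex `v` along the Hamiltonian path induced by `π`. -/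
def pos (π : Equiv.Perm (Fin (m+1))) (v : Fin (m+1)) : ℕ := (π.symm v : ℕ)

/-- Edges `e` and `f = e+1` of `P_x` form a switch pair: both `P_x`-neighbours of the
middle internal vertex `πx e.succ` lie on the same side of it in `π_y`. -/
def SwitchPairX (πx πy : Equiv.Perm (Fin (m+1))) (e f : Fin m) : Prop :=
  (e : ℕ) + 1 = (f : ℕ) ∧
    ((pos πy (pFst πx e) < pos πy (pSnd πx e) ∧ pos πy (pSnd πx f) < pos πy (pSnd πx e)) ∨
     (pos πy (pSnd πx e) < pos πy (pFst πx e) ∧ pos πy (pSnd πx e) < pos πy (pSnd πx f)))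

/-- Switch pairs of `P_y`: the same with the roles of the permutations swapped. -/
def SwitchPairY (πx πy : Equiv.Perm (Fin (m+1))) (e f : Fin m) : Prop :=
  SwitchPairX πy πx e f

/-- The `P_x`-edge `e` and the `P_y`-edge `f` have the same (unordered) pair of endpoints. -/
def SharedEdge (πx πy : Equiv.Perm (Fin (m+1))) (e f : Fin m) : Prop :=
  (pFst πx e = pFst πy f ∧ pSnd πx e = pSnd πy f) ∨
  (pFst πx e = pSnd πy f ∧ pSnd πx e = pFst πy f)

/-- Alignment of the `P_x`-edge `e`: positive (`True`) iff its endpoints appear in the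
same relative order in `π_x` and `π_y`. -/
def AlignX (πx πy : Equiv.Perm (Fin (m+1))) (e : Fin m) : Prop :=
  pos πy (pFst πx e) < pos πy (pSnd πx e)

/-- Alignment of the `P_y`-edge `e`. -/
def AlignY (πx πy : Equiv.Perm (Fin (m+1))) (e : Fin m) : Prop :=
  pos πx (pFst πy e) < pos πx (pSnd πy e)


/-- The subgraph of the constraint graph induced on `V_X`: switch-pair adjacency
between edges of `P_x`. -/
def GX (πx πy : Equiv.Perm (Fin (m+1))) : SimpleGraph (Fin m) where
  Adj e f := SwitchPairX πx πy e f ∨ SwitchPairX πx πy f e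
  symm := ⟨by rintro e f h; tauto⟩
  loopless := ⟨by rintro e (⟨h, -⟩ | ⟨h, -⟩) <;> omega⟩

/-- The subgraph of the constraint graph induced on `V_Y`. -/
def GY (πx πy : Equiv.Perm (Fin (m+1))) : SimpleGraph (Fin m) where
  Adj e f := SwitchPairY πx πy e f ∨ SwitchPairY πx πy f e
  symm := ⟨by rintro e f h; tauto⟩
  loopless := ⟨by rintro e (⟨h, -⟩ | ⟨h, -⟩) <;> omega⟩

/-!
Two edges of `P_x` are adjacent in `C_G` only if they are consecutive along `P_x`, so the
`V_X`-part of `C_G` is a subgraph of the path graph on the edges of `P_x`, hence has maximum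
degree 2 and no cycle; the same holds for `V_Y`. A shared edge `{u, v}` is the edge of `P_y`
starting at position `min (pos πy u) (pos πy v)`, so it has one copy in each path.
-/

open SimpleGraph

namespace SimpleGraph

/-- A walk from `v` to `v + 1` avoiding the edge `s(v, v + 1)` would have to cross the cut
`Set.Iic v`, which no other edge of the path graph does. -/
theorem pathGraph_isAcyclic (n : ℕ) : (pathGraph n).IsAcyclic := by
  refine isAcyclic_iff_forall_adj_isBridge.mpr ?_
  suffices h : ∀ v w : Fin n, (v : ℕ) + 1 = w → (pathGraph n).IsBridge s(v, w) by
    intro v w hvw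
    rcases pathGraph_adj.mp hvw with hvw | hwv
    · exact h v w hvw
    · exact Sym2.eq_swap ▸ h w v hwv
  intro v w hvw
  rw [isBridge_iff]
  rintro ⟨p⟩
  obtain ⟨d, -, hfst, hsnd⟩ := p.exists_boundary_dart (Set.Iic v) Set.self_mem_Iic
    (by rw [Set.mem_Iic, Fin.le_def]; omega)
  obtain ⟨hadj, hne⟩ := deleteEdges_adj.mp d.adj
  simp only [Set.mem_Iic, Fin.le_def, not_le] at hfst hsnd
  obtain ⟨hd₁, hd₂⟩ : d.fst = v ∧ d.snd = w := by
    rcases pathGraph_adj.mp hadj with h | h <;> exact ⟨Fin.ext (by omega), Fin.ext (by omega)⟩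
  exact hne (by simp [hd₁, hd₂])

theorem ncard_neighborSet_le_two_of_le_pathGraph {n : ℕ} {G : SimpleGraph (Fin n)}
    (hG : G ≤ pathGraph n) (e : Fin n) : (G.neighborSet e).ncard ≤ 2 := by
  have hsub : Fin.val '' G.neighborSet e ⊆ {(e : ℕ) + 1, (e : ℕ) - 1} := by
    rintro _ ⟨f, hf, rfl⟩
    rcases pathGraph_adj.mp (hG hf) with h | h <;> simp <;> omega
  calc (G.neighborSet e).ncard = (Fin.val '' G.neighborSet e).ncard :=
        (Set.ncard_image_of_injective _ Fin.val_injective).symm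
    _ ≤ ({(e : ℕ) + 1, (e : ℕ) - 1} : Set ℕ).ncard := Set.ncard_le_ncard hsub
    _ ≤ 2 := (Set.ncard_insert_le _ _).trans (by simp)

end SimpleGraph

theorem GX_le_pathGraph (πx πy : Equiv.Perm (Fin (m+1))) : GX πx πy ≤ pathGraph m := by
  rintro e f (⟨h, -⟩ | ⟨h, -⟩) <;> rw [pathGraph_adj] <;> omega

theorem GY_eq_GX_swap (πx πy : Equiv.Perm (Fin (m+1))) : GY πx πy = GX πy πx := rfl

theorem pos_pFst (π : Equiv.Perm (Fin (m+1))) (e : Fin m) : pos π (pFst π e) = e := by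
  simp [pos, pFst]

theorem pos_pSnd (π : Equiv.Perm (Fin (m+1))) (e : Fin m) : pos π (pSnd π e) = e + 1 := by
  simp [pos, pSnd]

theorem SharedEdge.symm {πx πy : Equiv.Perm (Fin (m+1))} {e f : Fin m}
    (h : SharedEdge πx πy e f) : SharedEdge πy πx f e := by
  unfold SharedEdge at h ⊢
  tauto

theorem SharedEdge.val_eq_min_pos {πx πy : Equiv.Perm (Fin (m+1))} {e f : Fin m}
    (h : SharedEdge πx πy e f) :
    (f : ℕ) = min (pos πy (pFst πx e)) (pos πy (pSnd πx e)) := by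
  rcases h with ⟨h₁, h₂⟩ | ⟨h₁, h₂⟩ <;> simp [h₁, h₂, pos_pFst, pos_pSnd]

/-- inside `V_X` the constraint graph is a disjoint union of paths
(max degree 2 and acyclic), likewise inside `V_Y`, and the shared-edge edges
between `V_X` and `V_Y` form a matching. -/
theorem constraintGraph_structure {m : ℕ} (πx πy : Equiv.Perm (Fin (m+1))) :
    (∀ e : Fin m, {f | (GX πx πy).Adj e f}.ncard ≤ 2) ∧ (GX πx πy).IsAcyclic ∧
    (∀ e : Fin m, {f | (GY πx πy).Adj e f}.ncard ≤ 2) ∧ (GY πx πy).IsAcyclic ∧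
    (∀ e f f' : Fin m, SharedEdge πx πy e f → SharedEdge πx πy e f' → f = f') ∧
    (∀ e e' f : Fin m, SharedEdge πx πy e f → SharedEdge πx πy e' f → e = e') := by
  rw [GY_eq_GX_swap]
  refine ⟨ncard_neighborSet_le_two_of_le_pathGraph (GX_le_pathGraph πx πy),
    (pathGraph_isAcyclic m).anti (GX_le_pathGraph πx πy),
    ncard_neighborSet_le_two_of_le_pathGraph (GX_le_pathGraph πy πx),
    (pathGraph_isAcyclic m).anti (GX_le_pathGraph πy πx), ?_, ?_⟩
  · intro e f f' hf hf'
    exact Fin.ext (hf.val_eq_min_pos.trans hf'.val_eq_min_pos.symm)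
  · intro e e' f he he'
    exact Fin.ext (he.symm.val_eq_min_pos.trans he'.symm.val_eq_min_pos.symm)
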